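/- arXiv:1507.01418 — 2 statements merged into one kernel-verified Lean document; each statement's English description precedes it below -/
import Mathlib

section
/- Let 1 < p < ∞ and let X = ℂ² be equipped with the ℓ^p norm ‖(x₁, x₂)‖_p = (|x₁|^p + |x₂|^p)^{1/p}. Let A be the bounded linear operator on X given by the matrix [[0, 1], [0, 0]], i.e. A(x₁, x₂) = (x₂, 0). Then the numerical spectrum of A is the closed disk centered at 0 of radius ((p−1)/p)^{1−1/p}·(1/p)^{1/p}, i.e. σ_n(A) = {λ ∈ ℂ : |λ| ≤ ((p−1)/p)^{1−1/p}·(1/p)^{1/p}}. -/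
open Complex

variable {X : Type*} [NormedAddCommGroup X] [NormedSpace ℂ X] [CompleteSpace X]

/-- The open half plane `H_{θ,ω}`, the rotation by the angle `θ` of `{z | Re z > ω}`. -/
def halfPlane (θ ω : ℝ) : Set ℂ :=
  {z : ℂ | ω < (Complex.exp (-(θ : ℂ) * Complex.I) * z).re}

/-- The numerical resolvent set of a bounded operator `A` : the union of all open half
planes `H_{θ,ω}` contained in the resolvent set of `A` on which
`‖R(z, A)‖ ≤ 1 / dist(z, ∂H_{θ,ω}) = 1 / (Re (e^{-iθ} z) - ω)`. -/
noncomputable def numResolventSet (A : X →L[ℂ] X) : Set ℂ :=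
  {z : ℂ | ∃ θ ω : ℝ, z ∈ halfPlane θ ω ∧ halfPlane θ ω ⊆ resolventSet ℂ A ∧
    ∀ w ∈ halfPlane θ ω,
      ‖resolvent A w‖ ≤ 1 / ((Complex.exp (-(θ : ℂ) * Complex.I) * w).re - ω)}

/-- The numerical spectrum of a bounded operator `A`. -/
noncomputable def numSpectrum (A : X →L[ℂ] X) : Set ℂ := (numResolventSet A)ᶜ

/-- The duality set `J(x)` of a vector `x`. -/
noncomputable def dualitySet (x : X) : Set (X →L[ℂ] ℂ) :=
  {j | j x = (‖x‖ ^ 2 : ℝ) ∧ ‖j‖ = ‖x‖}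

/-!
Write `r` for the claimed radius. For `x ∈ ℓ^p(2)` the duality functional
`j_x y = ‖x‖^(2-p) Σ |x_i|^(p-2) conj(x_i) y_i` satisfies `|j_x (A x)| = ‖x‖^(2-p) |x₀|^(p-1) |x₁|`,
which is at most `r ‖x‖²` by weighted AM-GM. Pairing `(w - A) x` with `j_x` gives
`‖(w - A) x‖ ≥ (Re (e^(-iθ) w) - r) ‖x‖`, so the half plane `Re (e^(-iθ) w) > r` is admissible for
every `θ`, and the numerical spectrum lies in the closed disk of radius `r`.

Conversely, let `Re (e^(-iθ) w) > ω` be admissible. Since `A² = 0`, the resolvent is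
`w⁻¹ (1 + w⁻¹ A)`. Testing it at `w = e^(iθ) / s` on the unit vector `x = (a, e^(iθ) b)` with
`a^p = (p-1)/p`, `b^p = 1/p` gives `((a + s b)^p + b^p)^(1/p) ≤ (1 - ω s)⁻¹` for small `s > 0`.
Both sides equal `1` at `s = 0`, so comparing derivatives there gives `r = a^(p-1) b ≤ ω`. Hence
no admissible half plane meets the disk.
-/

open ComplexConjugate Filter Topology

lemma norm_exp_neg_ofReal_mul_I (θ : ℝ) : ‖exp (-(θ : ℂ) * I)‖ = 1 := by
  simpa using norm_exp_ofReal_mul_I (-θ)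

lemma re_exp_neg_ofReal_mul_I_mul_le_norm (θ : ℝ) (z : ℂ) :
    (exp (-(θ : ℂ) * I) * z).re ≤ ‖z‖ :=
  (re_le_norm _).trans_eq (by rw [norm_mul, norm_exp_neg_ofReal_mul_I, one_mul])

lemma exp_neg_arg_mul_I_mul_self (z : ℂ) : exp (-(z.arg : ℂ) * I) * z = ‖z‖ := by
  conv_lhs => rw [← norm_mul_exp_arg_mul_I z]
  rw [mul_left_comm, ← exp_add]
  simp

lemma mem_halfPlane_arg_iff {z : ℂ} {ω : ℝ} : z ∈ halfPlane z.arg ω ↔ ω < ‖z‖ := by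
  simp only [halfPlane, Set.mem_ofPred_eq, exp_neg_arg_mul_I_mul_self, ofReal_re]

lemma lt_norm_of_mem_halfPlane {θ ω : ℝ} {w : ℂ} (hw : w ∈ halfPlane θ ω) : ω < ‖w‖ :=
  lt_of_lt_of_le hw (re_exp_neg_ofReal_mul_I_mul_le_norm θ w)

section SquareZero

variable {𝕜 B : Type*} [Field 𝕜] [Ring B] [Algebra 𝕜 B] {a : B} {w : 𝕜}

lemma algebraMap_sub_mul_inv_smul_one_add (ha : a * a = 0) (hw : w ≠ 0) :
    (algebraMap 𝕜 B w - a) * (w⁻¹ • (1 + w⁻¹ • a)) = 1 := by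
  simp [Algebra.algebraMap_eq_smul_one, sub_mul, mul_add, smul_smul, hw, ha, smul_sub]

lemma inv_smul_one_add_mul_algebraMap_sub (ha : a * a = 0) (hw : w ≠ 0) :
    (w⁻¹ • (1 + w⁻¹ • a)) * (algebraMap 𝕜 B w - a) = 1 := by
  simp [Algebra.algebraMap_eq_smul_one, mul_sub, add_mul, smul_smul, hw, ha]

lemma mem_resolventSet_of_mul_self_eq_zero (ha : a * a = 0) (hw : w ≠ 0) :
    w ∈ resolventSet 𝕜 a :=
  spectrum.mem_resolventSet_of_left_right_inverse (algebraMap_sub_mul_inv_smul_one_add ha hw)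
    (inv_smul_one_add_mul_algebraMap_sub ha hw)

lemma resolvent_eq_of_mul_self_eq_zero (ha : a * a = 0) (hw : w ≠ 0) :
    resolvent a w = w⁻¹ • (1 + w⁻¹ • a) :=
  Ring.inverse_unit
    ⟨_, _, algebraMap_sub_mul_inv_smul_one_add ha hw, inv_smul_one_add_mul_algebraMap_sub ha hw⟩

end SquareZero

section NumericalRange

variable {E : Type*} [NormedAddCommGroup E] [NormedSpace ℂ E] {A : E →L[ℂ] E}

lemma smul_resolvent_apply_sub_apply {w : ℂ} (hw : w ∈ resolventSet ℂ A) (y : E) :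
    w • resolvent A w y - A (resolvent A w y) = y := by
  have h := congr($(Ring.mul_inverse_cancel _ (spectrum.mem_resolventSet_iff.1 hw)) y)
  simpa [resolvent, Algebra.algebraMap_eq_smul_one] using h

lemma mul_norm_le_norm_smul_sub_of_mem_dualitySet {R : ℝ} {x : E} {j : E →L[ℂ] ℂ}
    (hj : j ∈ dualitySet x) (hAx : ‖j (A x)‖ ≤ R * ‖x‖ ^ 2) (θ : ℝ) (w : ℂ) :
    ((exp (-(θ : ℂ) * I) * w).re - R) * ‖x‖ ≤ ‖w • x - A x‖ := by
  obtain ⟨hjx, hjn⟩ := hj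
  set e := exp (-(θ : ℂ) * I)
  have he : ‖e‖ = 1 := norm_exp_neg_ofReal_mul_I θ
  have hre : (e * j (A x)).re ≤ R * ‖x‖ ^ 2 :=
    (re_le_norm _).trans (by rwa [norm_mul, he, one_mul])
  have key : ((e * w).re - R) * ‖x‖ ^ 2 ≤ ‖x‖ * ‖w • x - A x‖ :=
    calc ((e * w).re - R) * ‖x‖ ^ 2 ≤ (e * w).re * ‖x‖ ^ 2 - (e * j (A x)).re := by linarith
      _ = (e * j (w • x - A x)).re := by
        rw [map_sub, map_smul, hjx, smul_eq_mul, mul_sub, ← mul_assoc, sub_re, re_mul_ofReal]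
      _ ≤ ‖j (w • x - A x)‖ := (re_le_norm _).trans (by rw [norm_mul, he, one_mul])
      _ ≤ ‖x‖ * ‖w • x - A x‖ := hjn ▸ j.le_opNorm _
  rcases (norm_nonneg x).eq_or_lt with h0 | hpos
  · rw [← h0, mul_zero]
    exact norm_nonneg _
  · exact le_of_mul_le_mul_left (by linarith) hpos

lemma halfPlane_subset_numResolventSet {θ ω : ℝ} (hres : halfPlane θ ω ⊆ resolventSet ℂ A)
    (hlow : ∀ w ∈ halfPlane θ ω, ∀ x : E,
      ((exp (-(θ : ℂ) * I) * w).re - ω) * ‖x‖ ≤ ‖w • x - A x‖) :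
    halfPlane θ ω ⊆ numResolventSet A := by
  refine fun z hz => ⟨θ, ω, hz, hres, fun w hw => ?_⟩
  have hc : 0 < (exp (-(θ : ℂ) * I) * w).re - ω := sub_pos.2 hw
  refine ContinuousLinearMap.opNorm_le_bound _ (by positivity) fun y => ?_
  rw [one_div_mul_eq_div, le_div_iff₀ hc, mul_comm]
  simpa [smul_resolvent_apply_sub_apply (hres hw)] using hlow w hw (resolvent A w y)

lemma numSpectrum_subset_closedBall {R : ℝ} (hσ : ∀ w : ℂ, R < ‖w‖ → w ∈ resolventSet ℂ A)
    (hW : ∀ x : E, ∃ j ∈ dualitySet x, ‖j (A x)‖ ≤ R * ‖x‖ ^ 2) :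
    numSpectrum A ⊆ Metric.closedBall 0 R := by
  intro z hz
  rw [mem_closedBall_zero_iff]
  by_contra! hR
  refine hz (halfPlane_subset_numResolventSet (fun w hw => hσ w (lt_norm_of_mem_halfPlane hw))
    (fun w _ x => ?_) (mem_halfPlane_arg_iff.2 hR))
  obtain ⟨j, hj, hAx⟩ := hW x
  exact mul_norm_le_norm_smul_sub_of_mem_dualitySet hj hAx _ w

end NumericalRange

lemma Real.rpow_sub_two_mul_sq {p u : ℝ} (hp : p ≠ 0) (hu : 0 ≤ u) :
    u ^ (p - 2) * u ^ 2 = u ^ p := by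
  rw [← Real.rpow_natCast, ← Real.rpow_add' hu (by simpa using hp)]
  norm_num

lemma Real.rpow_sub_two_mul_self {p u : ℝ} (hp : p ≠ 1) (hu : 0 ≤ u) :
    u ^ (p - 2) * u = u ^ (p - 1) := by
  rw [← Real.rpow_add_one' hu (by rw [sub_add]; norm_num; exact sub_ne_zero.2 hp)]
  ring_nf

lemma HasDerivAt.le_of_eventuallyLE {f g : ℝ → ℝ} {f' g' x : ℝ} (hf : HasDerivAt f f' x)
    (hg : HasDerivAt g g' x) (hfg₀ : f x = g x) (hfg : f ≤ᶠ[𝓝[>] x] g) : f' ≤ g' := by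
  refine le_of_tendsto_of_tendsto (hasDerivAt_iff_tendsto_slope.1 hf |>.mono_left
    (nhdsGT_le_nhdsNE x)) (hasDerivAt_iff_tendsto_slope.1 hg |>.mono_left (nhdsGT_le_nhdsNE x)) ?_
  filter_upwards [hfg, self_mem_nhdsWithin] with s hs (hxs : x < s)
  rw [slope_def_field, slope_def_field, hfg₀]
  exact div_le_div_of_nonneg_right (by linarith) (by linarith)

section LpNilRadius

variable {p : ℝ}

/-- The maximum of `u ^ (p - 1) * v` on `u ^ p + v ^ p = 1`, attained at `u ^ p = (p - 1) / p`,
`v ^ p = 1 / p`. -/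
noncomputable def lpNilRadius (p : ℝ) : ℝ := ((p - 1) / p) ^ (1 - 1 / p) * (1 / p) ^ (1 / p)

lemma lpNilRadius_pos (hp : 1 < p) : 0 < lpNilRadius p := by
  have hp0 : 0 < p := by linarith
  unfold lpNilRadius
  have : 0 < (p - 1) / p := div_pos (by linarith) hp0
  positivity

lemma rpow_sub_one_mul_le_lpNilRadius_mul (hp : 1 < p) {u v : ℝ} (hu : 0 ≤ u) (hv : 0 ≤ v) :
    u ^ (p - 1) * v ≤ lpNilRadius p * (u ^ p + v ^ p) := by
  have hp0 : 0 < p := by linarith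
  set w₁ : ℝ := (p - 1) / p
  set w₂ : ℝ := 1 / p
  have hw₁ : 0 < w₁ := div_pos (by linarith) hp0
  have hw₂ : 0 < w₂ := by positivity
  have h := Real.geom_mean_le_arith_mean2_weighted hw₁.le hw₂.le
    (div_nonneg (Real.rpow_nonneg hu p) hw₁.le) (div_nonneg (Real.rpow_nonneg hv p) hw₂.le)
    (by simp only [w₁, w₂]; field_simp; ring)
  rw [mul_div_cancel₀ _ hw₁.ne', mul_div_cancel₀ _ hw₂.ne',
    Real.div_rpow (Real.rpow_nonneg hu p) hw₁.le, Real.div_rpow (Real.rpow_nonneg hv p) hw₂.le,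
    ← Real.rpow_mul hu, ← Real.rpow_mul hv, show p * w₁ = p - 1 by simp only [w₁]; field_simp,
    show p * w₂ = 1 by simp only [w₂]; field_simp, Real.rpow_one] at h
  have hR : lpNilRadius p = w₁ ^ w₁ * w₂ ^ w₂ := by
    rw [lpNilRadius, show 1 - 1 / p = w₁ by simp only [w₁]; field_simp]
  rw [hR]
  calc u ^ (p - 1) * v = (w₁ ^ w₁ * w₂ ^ w₂) * (u ^ (p - 1) / w₁ ^ w₁ * (v / w₂ ^ w₂)) := by
        field_simp
    _ ≤ (w₁ ^ w₁ * w₂ ^ w₂) * (u ^ p + v ^ p) := by gcongr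

lemma lpNilRadius_eq (hp : 1 < p) :
    lpNilRadius p = (((p - 1) / p) ^ (1 / p)) ^ (p - 1) * (1 / p) ^ (1 / p) := by
  have hp0 : 0 < p := by linarith
  rw [lpNilRadius, ← Real.rpow_mul (div_pos (by linarith) hp0).le]
  congr 2
  field_simp

lemma hasDerivAt_rpow_add_rpow_rpow_one_div (hp : 1 < p) {a b : ℝ} (hab : a ^ p + b ^ p = 1) :
    HasDerivAt (fun s => ((a + s * b) ^ p + b ^ p) ^ (1 / p)) (a ^ (p - 1) * b) 0 := by
  have hinner : HasDerivAt (fun s => a + s * b) b 0 := by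
    simpa using ((hasDerivAt_id (0 : ℝ)).mul_const b).const_add a
  have h := ((hinner.rpow_const (Or.inr hp.le)).add_const (b ^ p)).rpow_const
    (p := 1 / p) (Or.inl (by simp [hab]))
  convert h using 1
  simp only [zero_mul, add_zero, hab, Real.one_rpow]
  field_simp

end LpNilRadius

section Lp

variable {ι : Type*} [Fintype ι] {p : ℝ}

local notation "ℓp" => PiLp (ENNReal.ofReal p) (fun _ : ι => ℂ)

lemma PiLp.norm_ofReal_rpow_eq_sum (hp : 0 < p) (x : ℓp) : ‖x‖ ^ p = ∑ i, ‖x i‖ ^ p := by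
  rw [PiLp.norm_eq_sum (by rwa [ENNReal.toReal_ofReal hp.le]), ENNReal.toReal_ofReal hp.le,
    ← Real.rpow_mul (Finset.sum_nonneg fun i _ => by positivity), one_div_mul_cancel hp.ne',
    Real.rpow_one]

variable (p) in
/-- The derivative of `‖·‖ ^ 2 / 2` at `x`. -/
noncomputable def lpDual (x : ℓp) : ℓp →L[ℂ] ℂ :=
  ((‖x‖ ^ (2 - p) : ℝ) : ℂ) •
    ∑ i, (((‖x i‖ ^ (p - 2) : ℝ) : ℂ) * conj (x i)) • PiLp.proj (ENNReal.ofReal p) (fun _ => ℂ) i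

lemma lpDual_apply (x y : ℓp) :
    lpDual p x y =
      ((‖x‖ ^ (2 - p) : ℝ) : ℂ) * ∑ i, ((‖x i‖ ^ (p - 2) : ℝ) : ℂ) * conj (x i) * y i := by
  simp [lpDual, Finset.mul_sum, mul_assoc]

variable [Fact (1 ≤ ENNReal.ofReal p)]

lemma sum_norm_rpow_sub_one_mul_norm_le (hp : 1 < p) (x y : ℓp) :
    ∑ i, ‖x i‖ ^ (p - 1) * ‖y i‖ ≤ ‖x‖ ^ (p - 1) * ‖y‖ := by
  have hpq := (Real.HolderConjugate.conjExponent hp).symm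
  have hp0 : 0 < p := by linarith
  have h := Real.inner_le_Lp_mul_Lq_of_nonneg Finset.univ hpq
    (f := fun i => ‖x i‖ ^ (p - 1)) (g := fun i => ‖y i‖) (fun i _ => by positivity)
    (fun i _ => by positivity)
  simp only [← Real.rpow_mul (norm_nonneg _), hpq.symm.sub_one_mul_conj] at h
  have hexp : p * (1 / p.conjExponent) = p - 1 := by
    rw [Real.conjExponent]
    field_simp
  rwa [← PiLp.norm_ofReal_rpow_eq_sum hp0, ← PiLp.norm_ofReal_rpow_eq_sum hp0,
    ← Real.rpow_mul (norm_nonneg x), ← Real.rpow_mul (norm_nonneg y), hexp,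
    mul_one_div_cancel hp0.ne', Real.rpow_one] at h

lemma lpDual_apply_self (hp : 1 < p) (x : ℓp) : lpDual p x x = ‖x‖ ^ 2 := by
  have hp0 : 0 < p := by linarith
  have hsum : ∑ i, ((‖x i‖ ^ (p - 2) : ℝ) : ℂ) * conj (x i) * x i = ((‖x‖ ^ p : ℝ) : ℂ) := by
    simp only [mul_assoc, conj_mul', PiLp.norm_ofReal_rpow_eq_sum hp0]
    push_cast
    congr 1 with i
    rw [← ofReal_pow, ← ofReal_mul, Real.rpow_sub_two_mul_sq hp0.ne' (norm_nonneg _)]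
  rw [lpDual_apply, hsum, ← ofReal_mul, ← Real.rpow_add' (norm_nonneg x) (by norm_num)]
  norm_num

lemma norm_lpDual_apply_le (hp : 1 < p) (x y : ℓp) : ‖lpDual p x y‖ ≤ ‖x‖ * ‖y‖ :=
  calc ‖lpDual p x y‖ ≤ ‖x‖ ^ (2 - p) * ∑ i, ‖x i‖ ^ (p - 1) * ‖y i‖ := by
        rw [lpDual_apply, norm_mul, norm_real, Real.norm_of_nonneg (by positivity)]
        gcongr
        refine (norm_sum_le _ _).trans_eq (Finset.sum_congr rfl fun i _ => ?_)
        rw [norm_mul, norm_mul, norm_real, Real.norm_of_nonneg (by positivity), norm_conj,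
          Real.rpow_sub_two_mul_self hp.ne' (norm_nonneg _)]
    _ ≤ ‖x‖ ^ (2 - p) * (‖x‖ ^ (p - 1) * ‖y‖) := by
        gcongr
        exact sum_norm_rpow_sub_one_mul_norm_le hp x y
    _ = ‖x‖ * ‖y‖ := by
        rw [← mul_assoc, ← Real.rpow_add' (norm_nonneg x) (by norm_num)]
        norm_num

lemma lpDual_mem_dualitySet (hp : 1 < p) (x : ℓp) : lpDual p x ∈ dualitySet x := by
  refine ⟨by rw [lpDual_apply_self hp]; push_cast; rfl, le_antisymm
    (ContinuousLinearMap.opNorm_le_bound _ (norm_nonneg x) (norm_lpDual_apply_le hp x)) ?_⟩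
  rcases (norm_nonneg x).eq_or_lt with h0 | hpos
  · exact h0 ▸ norm_nonneg _
  · refine le_of_mul_le_mul_right ?_ hpos
    calc ‖x‖ * ‖x‖ = ‖lpDual p x x‖ := by rw [lpDual_apply_self hp]; simp [sq]
      _ ≤ ‖lpDual p x‖ * ‖x‖ := (lpDual p x).le_opNorm x

end Lp

section NilpotentOperator

variable {p : ℝ}

local notation "ℓp²" => PiLp (ENNReal.ofReal p) (fun _ : Fin 2 => ℂ)

lemma norm_eq_rpow_add_rpow_of_fin_two (hp : 0 < p) (x : ℓp²) :
    ‖x‖ = (‖x 0‖ ^ p + ‖x 1‖ ^ p) ^ (1 / p) := by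
  rw [PiLp.norm_eq_sum (by rwa [ENNReal.toReal_ofReal hp.le]), ENNReal.toReal_ofReal hp.le,
    Fin.sum_univ_two]

lemma mul_self_eq_zero_of_apply_fin_two {A : ℓp² →L[ℂ] ℓp²}
    (hA : ∀ x : ℓp², A x 0 = x 1 ∧ A x 1 = 0) :
    A * A = 0 := by
  ext x i
  fin_cases i
  · simp [(hA _).1, (hA x).2]
  · simp [(hA _).2]

variable [Fact (1 ≤ ENNReal.ofReal p)]

lemma norm_lpDual_apply_le_lpNilRadius_mul (hp : 1 < p) {A : ℓp² →L[ℂ] ℓp²}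
    (hA : ∀ x : ℓp², A x 0 = x 1 ∧ A x 1 = 0) (x : ℓp²) :
    ‖lpDual p x (A x)‖ ≤ lpNilRadius p * ‖x‖ ^ 2 := by
  have hp0 : 0 < p := by linarith
  have hdual : lpDual p x (A x) = ((‖x‖ ^ (2 - p) : ℝ) : ℂ) *
      (((‖x 0‖ ^ (p - 2) : ℝ) : ℂ) * conj (x 0) * x 1) := by
    simp [lpDual_apply, Fin.sum_univ_two, (hA x).1, (hA x).2]
  calc ‖lpDual p x (A x)‖ = ‖x‖ ^ (2 - p) * (‖x 0‖ ^ (p - 1) * ‖x 1‖) := by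
        rw [hdual, norm_mul, norm_mul, norm_mul, norm_real, norm_real, norm_conj,
          Real.norm_of_nonneg (by positivity), Real.norm_of_nonneg (by positivity),
          Real.rpow_sub_two_mul_self hp.ne' (norm_nonneg _)]
    _ ≤ ‖x‖ ^ (2 - p) * (lpNilRadius p * ‖x‖ ^ p) := by
        rw [PiLp.norm_ofReal_rpow_eq_sum hp0, Fin.sum_univ_two]
        exact mul_le_mul_of_nonneg_left
          (rpow_sub_one_mul_le_lpNilRadius_mul hp (norm_nonneg _) (norm_nonneg _)) (by positivity)
    _ = lpNilRadius p * ‖x‖ ^ 2 := by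
        rw [mul_left_comm, ← Real.rpow_add' (norm_nonneg x) (by norm_num)]
        norm_num

lemma numSpectrum_subset_closedBall_lpNilRadius (hp : 1 < p) {A : ℓp² →L[ℂ] ℓp²}
    (hA : ∀ x : ℓp², A x 0 = x 1 ∧ A x 1 = 0) :
    numSpectrum A ⊆ Metric.closedBall 0 (lpNilRadius p) :=
  numSpectrum_subset_closedBall
    (fun _ hw => mem_resolventSet_of_mul_self_eq_zero (mul_self_eq_zero_of_apply_fin_two hA)
      (norm_pos_iff.1 ((lpNilRadius_pos hp).trans hw)))
    fun x => ⟨lpDual p x, lpDual_mem_dualitySet hp x, norm_lpDual_apply_le_lpNilRadius_mul hp hA x⟩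

lemma norm_resolvent_apply_of_fin_two (hp : 0 < p) {A : ℓp² →L[ℂ] ℓp²}
    (hA : ∀ x : ℓp², A x 0 = x 1 ∧ A x 1 = 0) (θ : ℝ) {a b s : ℝ} (ha : 0 ≤ a) (hb : 0 ≤ b)
    (hs : 0 < s) :
    ‖resolvent A (exp (θ * I) * (s⁻¹ : ℝ)) (WithLp.toLp _ ![(a : ℂ), exp (θ * I) * b])‖ =
      s * ((a + s * b) ^ p + b ^ p) ^ (1 / p) := by
  set e := exp (θ * I)
  set w : ℂ := e * (s⁻¹ : ℝ)
  set x : ℓp² := WithLp.toLp _ ![(a : ℂ), e * b]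
  have he : e ≠ 0 := exp_ne_zero _
  have hw : w ≠ 0 := mul_ne_zero he (by simpa using hs.ne')
  have hwinv : w⁻¹ = e⁻¹ * s := by simp [w, mul_comm]
  have hR : resolvent A w x = w⁻¹ • (x + w⁻¹ • A x) := by
    rw [resolvent_eq_of_mul_self_eq_zero (mul_self_eq_zero_of_apply_fin_two hA) hw]
    rfl
  have hy0 : (x + w⁻¹ • A x) 0 = ((a + s * b : ℝ) : ℂ) := by
    simp [x, (hA x).1, hwinv]
    field_simp
  have hy1 : (x + w⁻¹ • A x) 1 = e * b := by
    simp [(hA x).2, x]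
  rw [hR, norm_smul, norm_eq_rpow_add_rpow_of_fin_two hp, hy0, hy1, hwinv, norm_mul, norm_mul,
    norm_inv, norm_exp_ofReal_mul_I, inv_one, one_mul, one_mul, norm_real, norm_real, norm_real,
    Real.norm_of_nonneg hs.le, Real.norm_of_nonneg hb, Real.norm_of_nonneg (by positivity)]

lemma rpow_add_rpow_le_of_norm_resolvent_le (hp : 1 < p) {A : ℓp² →L[ℂ] ℓp²}
    (hA : ∀ x : ℓp², A x 0 = x 1 ∧ A x 1 = 0) {θ ω : ℝ}
    (hbound : ∀ w ∈ halfPlane θ ω, ‖resolvent A w‖ ≤ 1 / ((exp (-(θ : ℂ) * I) * w).re - ω))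
    {a b s : ℝ} (ha : 0 ≤ a) (hb : 0 ≤ b) (hab : a ^ p + b ^ p = 1) (hs : 0 < s)
    (hωs : ω < s⁻¹) :
    ((a + s * b) ^ p + b ^ p) ^ (1 / p) ≤ (1 - ω * s)⁻¹ := by
  have hp0 : 0 < p := by linarith
  set w : ℂ := exp (θ * I) * (s⁻¹ : ℝ)
  set x : ℓp² := WithLp.toLp _ ![(a : ℂ), exp (θ * I) * b]
  have hx : ‖x‖ = 1 := by
    rw [norm_eq_rpow_add_rpow_of_fin_two hp0]
    simp [x, norm_exp_ofReal_mul_I, Real.norm_of_nonneg ha, Real.norm_of_nonneg hb, hab]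
  have hrot : exp (-(θ : ℂ) * I) * w = (s⁻¹ : ℝ) := by
    rw [← mul_assoc, ← exp_add]
    simp
  have hmem : w ∈ halfPlane θ ω := by
    rwa [halfPlane, Set.mem_ofPred_eq, hrot, ofReal_re]
  refine le_of_mul_le_mul_left ?_ hs
  calc s * ((a + s * b) ^ p + b ^ p) ^ (1 / p) = ‖resolvent A w x‖ :=
        (norm_resolvent_apply_of_fin_two hp0 hA θ ha hb hs).symm
    _ ≤ ‖resolvent A w‖ := by simpa [hx] using (resolvent A w).le_opNorm x
    _ ≤ 1 / (s⁻¹ - ω) := by simpa only [hrot, ofReal_re] using hbound w hmem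
    _ = s * (1 - ω * s)⁻¹ := by field_simp

lemma lpNilRadius_le_of_norm_resolvent_le (hp : 1 < p) {A : ℓp² →L[ℂ] ℓp²}
    (hA : ∀ x : ℓp², A x 0 = x 1 ∧ A x 1 = 0) {θ ω : ℝ}
    (hbound : ∀ w ∈ halfPlane θ ω, ‖resolvent A w‖ ≤ 1 / ((exp (-(θ : ℂ) * I) * w).re - ω)) :
    lpNilRadius p ≤ ω := by
  have hp0 : 0 < p := by linarith
  set a : ℝ := ((p - 1) / p) ^ (1 / p)
  set b : ℝ := (1 / p) ^ (1 / p)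
  have hab : a ^ p + b ^ p = 1 := by
    rw [← Real.rpow_mul (div_pos (by linarith) hp0).le, ← Real.rpow_mul (by positivity),
      one_div_mul_cancel hp0.ne', Real.rpow_one, Real.rpow_one]
    field_simp
    ring
  have hle : (fun s => ((a + s * b) ^ p + b ^ p) ^ (1 / p)) ≤ᶠ[𝓝[>] 0]
      fun s => (1 - ω * s)⁻¹ := by
    filter_upwards [self_mem_nhdsWithin, tendsto_inv_nhdsGT_zero.eventually_gt_atTop ω]
      with s hs hωs
    exact rpow_add_rpow_le_of_norm_resolvent_le hp hA hbound (by positivity) (by positivity) hab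
      hs hωs
  have hg : HasDerivAt (fun s : ℝ => (1 - ω * s)⁻¹) ω 0 := by
    simpa using (((hasDerivAt_id (0 : ℝ)).const_mul ω).const_sub 1).fun_inv (by simp)
  rw [lpNilRadius_eq hp]
  exact (hasDerivAt_rpow_add_rpow_rpow_one_div hp hab).le_of_eventuallyLE hg (by simp [hab]) hle

lemma closedBall_lpNilRadius_subset_numSpectrum (hp : 1 < p) {A : ℓp² →L[ℂ] ℓp²}
    (hA : ∀ x : ℓp², A x 0 = x 1 ∧ A x 1 = 0) :
    Metric.closedBall 0 (lpNilRadius p) ⊆ numSpectrum A := by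
  rintro z hz ⟨θ, ω, hzH, -, hbound⟩
  have := (lpNilRadius_le_of_norm_resolvent_le hp hA hbound).trans_lt (lt_norm_of_mem_halfPlane hzH)
  exact (mem_closedBall_zero_iff.1 hz).not_gt this

end NilpotentOperator

/-- The numerical spectrum of the nilpotent matrix `[[0,1],[0,0]]` on `(ℂ², ‖·‖_p)` for
`1 < p < ∞` is the closed disk of radius `((p-1)/p)^(1-1/p) · (1/p)^(1/p)` centered at `0`. -/
theorem numSpectrum_nilpotent_lp (p : ℝ) (hp : 1 < p) [Fact (1 ≤ ENNReal.ofReal p)]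
    (A : PiLp (ENNReal.ofReal p) (fun _ : Fin 2 => ℂ) →L[ℂ]
      PiLp (ENNReal.ofReal p) (fun _ : Fin 2 => ℂ))
    (hA : ∀ x : PiLp (ENNReal.ofReal p) (fun _ : Fin 2 => ℂ),
      A x 0 = x 1 ∧ A x 1 = 0) :
    numSpectrum A =
      {lam : ℂ | ‖lam‖ ≤ ((p - 1) / p) ^ (1 - 1 / p) * (1 / p) ^ (1 / p)} := by
  have h := (numSpectrum_subset_closedBall_lpNilRadius hp hA).antisymm
    (closedBall_lpNilRadius_subset_numSpectrum hp hA)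
  ext z
  simp [h, lpNilRadius]
end

section
/- Let X be a complex Banach space and A a bounded linear operator on X. Then the following are equivalent: (a) there exists ε > 0 such that ‖exp(tA)‖ ≤ e^{−tε} for all t ≥ 0; (b) there exists ε > 0 such that Re(j(Ax)) ≤ −ε‖x‖² for all x ∈ X and all j ∈ J(x). -/
open Complex

variable {X : Type*} [NormedAddCommGroup X] [NormedSpace ℂ X] [CompleteSpace X]

/-!
Pairing `x - hAx` with some `j ∈ J(x)` shows that strict dissipativity gives
`‖(1 - hA)x‖ ≥ (1 + hε)‖x‖` for `h ≥ 0`. As `(1 - hA) exp(hA) = 1 + o(h)`, this yields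
`(1 + hε)‖exp(hA)‖ ≤ 1 + o(h)`; splitting `exp(tA) = exp(tA/n)^n` and letting `n → ∞` gives
`e^{tε}‖exp(tA)‖ ≤ 1`. Conversely, `t ↦ Re j(exp(tA)x) - e^{-tε}‖x‖²` vanishes at `0` and is
nonpositive for `t ≥ 0`, so its derivative `Re j(Ax) + ε‖x‖²` at `0` is nonpositive.
-/

open Filter Topology Asymptotics

theorem ContinuousLinearMap.mul_opNorm_le_opNorm_comp {𝕜 E F G : Type*}
    [NontriviallyNormedField 𝕜] [SeminormedAddCommGroup E] [SeminormedAddCommGroup F]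
    [SeminormedAddCommGroup G] [NormedSpace 𝕜 E] [NormedSpace 𝕜 F] [NormedSpace 𝕜 G]
    {S : F →L[𝕜] G} {c : ℝ} (hS : ∀ y, c * ‖y‖ ≤ ‖S y‖) (T : E →L[𝕜] F) :
    c * ‖T‖ ≤ ‖S.comp T‖ := by
  rcases le_or_gt c 0 with hc | hc
  · exact (mul_nonpos_of_nonpos_of_nonneg hc (norm_nonneg T)).trans (norm_nonneg _)
  rw [← le_div_iff₀' hc]
  refine T.opNorm_le_bound (by positivity) fun x => ?_
  rw [div_mul_eq_mul_div, le_div_iff₀' hc]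
  exact (hS (T x)).trans ((S.comp T).le_opNorm x)

theorem isLittleO_one_sub_smul_mul_exp_smul_sub_one {𝔸 : Type*} [NormedRing 𝔸]
    [NormedAlgebra ℝ 𝔸] [CompleteSpace 𝔸] (a : 𝔸) :
    (fun h : ℝ => (1 - h • a) * NormedSpace.exp (h • a) - 1) =o[𝓝 0] id := by
  have hderiv : HasDerivAt (fun h : ℝ => (1 - h • a) * NormedSpace.exp (h • a)) 0 0 := by
    have := ((hasDerivAt_id (0 : ℝ)).smul_const a).const_sub 1 |>.mul
      (hasDerivAt_exp_smul_const' (𝕂 := ℝ) a 0)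
    convert this using 1
    · rfl
    · simp
  have := hderiv.isLittleO
  simp only [sub_zero, zero_smul, NormedSpace.exp_zero, mul_one, smul_zero] at this
  exact this

theorem tendsto_nat_mul_norm_div_of_isLittleO {F : Type*} [NormedAddCommGroup F] {f : ℝ → F}
    (hf : f =o[𝓝 0] id) (t : ℝ) :
    Tendsto (fun n : ℕ => (n : ℝ) * ‖f (t / n)‖) atTop (𝓝 0) := by
  have hlim : Tendsto (fun n : ℕ => t / n) atTop (𝓝 0) := tendsto_const_div_atTop_nhds_zero_nat t
  have : (fun n : ℕ => ‖f (t / n)‖) =o[atTop] fun n : ℕ => (n : ℝ)⁻¹ :=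
    (hf.comp_tendsto hlim).norm_left.trans_isBigO <| by
      simpa [div_eq_mul_inv] using isBigO_const_mul_self t (fun n : ℕ => (n : ℝ)⁻¹) atTop
  simpa using this.tendsto_inv_smul_nhds_zero

theorem HasDerivAt.nonpos_of_forall_le_right {f : ℝ → ℝ} {f' x : ℝ} (hf : HasDerivAt f f' x)
    (hle : ∀ t, x < t → f t ≤ f x) : f' ≤ 0 := by
  refine le_of_tendsto hf.tendsto_slope_zero_right ?_
  filter_upwards [self_mem_nhdsWithin] with t (ht : 0 < t)
  exact smul_nonpos_of_nonneg_of_nonpos (inv_nonneg.2 ht.le) (sub_nonpos.2 (hle _ (by linarith)))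

section Dissipative

variable {E : Type*} [NormedAddCommGroup E] [NormedSpace ℂ E] {A : E →L[ℂ] E} {ε : ℝ}

theorem dualitySet_nonempty (x : E) : (dualitySet x).Nonempty := by
  rcases eq_or_ne x 0 with rfl | hx
  · exact ⟨0, by simp [dualitySet]⟩
  obtain ⟨g, hg, hgx⟩ := exists_dual_vector ℂ x (norm_ne_zero_iff.mpr hx)
  refine ⟨(‖x‖ : ℂ) • g, ?_, ?_⟩
  · simp [hgx, sq]
  · simp [norm_smul, hg]

theorem re_apply_self_of_mem_dualitySet {x : E} {j : E →L[ℂ] ℂ} (hj : j ∈ dualitySet x) :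
    (j x).re = ‖x‖ ^ 2 := by
  rw [hj.1, Complex.ofReal_re]

theorem re_apply_le_of_mem_dualitySet {x : E} {j : E →L[ℂ] ℂ} (hj : j ∈ dualitySet x) (y : E) :
    (j y).re ≤ ‖x‖ * ‖y‖ :=
  calc (j y).re ≤ ‖j y‖ := Complex.re_le_norm _
    _ ≤ ‖j‖ * ‖y‖ := j.le_opNorm y
    _ = ‖x‖ * ‖y‖ := by rw [hj.2]

theorem mul_norm_le_norm_sub_smul_of_dissipative
    (hA : ∀ x : E, ∀ j ∈ dualitySet x, (j (A x)).re ≤ -ε * ‖x‖ ^ 2)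
    {h : ℝ} (hh : 0 ≤ h) (x : E) : (1 + h * ε) * ‖x‖ ≤ ‖x - h • A x‖ := by
  rcases eq_or_ne x 0 with rfl | hx
  · simp
  obtain ⟨j, hj⟩ := dualitySet_nonempty x
  have key : ‖x‖ * ((1 + h * ε) * ‖x‖) ≤ ‖x‖ * ‖x - h • A x‖ :=
    calc ‖x‖ * ((1 + h * ε) * ‖x‖) ≤ ‖x‖ ^ 2 - h * (j (A x)).re := by
          nlinarith [hA x j hj]
      _ = (j (x - h • A x)).re := by
          simp [re_apply_self_of_mem_dualitySet hj]
      _ ≤ ‖x‖ * ‖x - h • A x‖ := re_apply_le_of_mem_dualitySet hj _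
  exact le_of_mul_le_mul_left key (norm_pos_iff.mpr hx)

theorem mul_norm_exp_smul_le_of_dissipative
    (hA : ∀ x : E, ∀ j ∈ dualitySet x, (j (A x)).re ≤ -ε * ‖x‖ ^ 2) {h : ℝ} (hh : 0 ≤ h) :
    (1 + h * ε) * ‖NormedSpace.exp (h • A)‖ ≤
      1 + ‖(1 - h • A) * NormedSpace.exp (h • A) - 1‖ :=
  calc (1 + h * ε) * ‖NormedSpace.exp (h • A)‖ ≤ ‖(1 - h • A) * NormedSpace.exp (h • A)‖ :=
        ContinuousLinearMap.mul_opNorm_le_opNorm_comp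
          (fun x => by simpa using mul_norm_le_norm_sub_smul_of_dissipative hA hh x) _
    _ ≤ ‖(1 : E →L[ℂ] E)‖ + ‖(1 - h • A) * NormedSpace.exp (h • A) - 1‖ :=
        norm_le_norm_add_norm_sub' _ _
    _ ≤ 1 + ‖(1 - h • A) * NormedSpace.exp (h • A) - 1‖ := by
        gcongr
        exact ContinuousLinearMap.norm_id_le

theorem pow_mul_norm_exp_smul_le_of_dissipative [CompleteSpace E]
    (hA : ∀ x : E, ∀ j ∈ dualitySet x, (j (A x)).re ≤ -ε * ‖x‖ ^ 2) {t : ℝ} (ht : 0 ≤ t)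
    {n : ℕ} (hn : 0 < n) (hpos : 0 ≤ 1 + t * ε / n) :
    (1 + t * ε / n) ^ n * ‖NormedSpace.exp (t • A)‖ ≤
      (1 + ‖(1 - (t / n) • A) * NormedSpace.exp ((t / n) • A) - 1‖) ^ n := by
  have hsplit : NormedSpace.exp (t • A) = NormedSpace.exp ((t / n) • A) ^ n := by
    let : NormedAlgebra ℚ (E →L[ℂ] E) := .restrictScalars ℚ ℂ _
    rw [← NormedSpace.exp_nsmul, ← Nat.cast_smul_eq_nsmul ℝ, smul_smul,
      mul_div_cancel₀ _ (by positivity)]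
  rw [hsplit, mul_div_right_comm]
  rw [mul_div_right_comm] at hpos
  calc (1 + t / n * ε) ^ n * ‖NormedSpace.exp ((t / n) • A) ^ n‖
      ≤ (1 + t / n * ε) ^ n * ‖NormedSpace.exp ((t / n) • A)‖ ^ n := by
        gcongr
        exact norm_pow_le' _ hn
    _ = ((1 + t / n * ε) * ‖NormedSpace.exp ((t / n) • A)‖) ^ n := (mul_pow _ _ _).symm
    _ ≤ _ := pow_le_pow_left₀ (mul_nonneg hpos (norm_nonneg _))
        (mul_norm_exp_smul_le_of_dissipative hA (by positivity)) n

theorem norm_exp_smul_le_of_dissipative [CompleteSpace E]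
    (hA : ∀ x : E, ∀ j ∈ dualitySet x, (j (A x)).re ≤ -ε * ‖x‖ ^ 2) {t : ℝ} (ht : 0 ≤ t) :
    ‖NormedSpace.exp (t • A)‖ ≤ Real.exp (-t * ε) := by
  have hstep : ∀ᶠ n : ℕ in atTop, (1 + t * ε / n) ^ n * ‖NormedSpace.exp (t • A)‖ ≤
      (1 + ‖(1 - (t / n) • A) * NormedSpace.exp ((t / n) • A) - 1‖) ^ n := by
    have hsmall := (tendsto_const_div_atTop_nhds_zero_nat (t * ε)).eventually_const_le
      (show (-1 : ℝ) < 0 by norm_num)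
    filter_upwards [eventually_gt_atTop 0, hsmall] with n hn hpos
    exact pow_mul_norm_exp_smul_le_of_dissipative hA ht hn (by linarith)
  have hlim_left : Tendsto (fun n : ℕ => (1 + t * ε / n) ^ n * ‖NormedSpace.exp (t • A)‖) atTop
      (𝓝 (Real.exp (t * ε) * ‖NormedSpace.exp (t • A)‖)) :=
    (Real.tendsto_one_add_div_pow_exp _).mul_const _
  have hlim_right : Tendsto
      (fun n : ℕ => (1 + ‖(1 - (t / n) • A) * NormedSpace.exp ((t / n) • A) - 1‖) ^ n) atTop
      (𝓝 1) := by
    simpa using Real.tendsto_one_add_pow_exp_of_tendsto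
      (tendsto_nat_mul_norm_div_of_isLittleO (isLittleO_one_sub_smul_mul_exp_smul_sub_one A) t)
  have := le_of_tendsto_of_tendsto hlim_left hlim_right hstep
  rwa [neg_mul, Real.exp_neg, ← one_div, le_div_iff₀' (Real.exp_pos _)]

theorem re_apply_le_of_norm_exp_smul_le [CompleteSpace E]
    (hA : ∀ t : ℝ, 0 ≤ t → ‖NormedSpace.exp (t • A)‖ ≤ Real.exp (-t * ε))
    {x : E} {j : E →L[ℂ] ℂ} (hj : j ∈ dualitySet x) : (j (A x)).re ≤ -ε * ‖x‖ ^ 2 := by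
  set F : ℝ → ℝ := fun t => (j (NormedSpace.exp (t • A) x)).re - ‖x‖ ^ 2 * Real.exp (-t * ε)
  have hF : HasDerivAt F ((j (A x)).re - ‖x‖ ^ 2 * -ε) 0 := by
    let L : (E →L[ℂ] E) →L[ℝ] ℝ := Complex.reCLM.comp
      ((j.restrictScalars ℝ).comp ((ContinuousLinearMap.apply ℂ E x).restrictScalars ℝ))
    have h1 : HasDerivAt (fun t : ℝ => (j (NormedSpace.exp (t • A) x)).re) (j (A x)).re 0 := by
      have := L.hasFDerivAt.comp_hasDerivAt (0 : ℝ) (hasDerivAt_exp_smul_const' (𝕂 := ℝ) A 0)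
      rwa [show L (A * NormedSpace.exp ((0 : ℝ) • A)) = (j (A x)).re by simp [L]] at this
    have h2 : HasDerivAt (fun t : ℝ => ‖x‖ ^ 2 * Real.exp (-t * ε)) (‖x‖ ^ 2 * -ε) 0 := by
      simpa using ((hasDerivAt_neg' (0 : ℝ)).mul_const ε).exp.const_mul (‖x‖ ^ 2)
    exact h1.sub h2
  have hF0 : F 0 = 0 := by simp [F, re_apply_self_of_mem_dualitySet hj]
  have hle : ∀ t, 0 < t → F t ≤ F 0 := by
    intro t ht
    rw [hF0, sub_nonpos]
    calc (j (NormedSpace.exp (t • A) x)).re ≤ ‖x‖ * ‖NormedSpace.exp (t • A) x‖ :=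
          re_apply_le_of_mem_dualitySet hj _
      _ ≤ ‖x‖ * (Real.exp (-t * ε) * ‖x‖) := by
          gcongr
          exact (NormedSpace.exp (t • A)).le_of_opNorm_le (hA t ht.le) x
      _ = ‖x‖ ^ 2 * Real.exp (-t * ε) := by ring
  linarith [hF.nonpos_of_forall_le_right hle]

end Dissipative

/-- Uniform exponential contractivity: `‖exp(tA)‖ ≤ e^{-tε}` for all `t ≥ 0` and some
`ε > 0` iff `Re ⟨Ax, j(x)⟩ ≤ -ε ‖x‖²` for all `x` and all `j ∈ J(x)` and some `ε > 0`. -/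
theorem exp_decay_iff_strictly_dissipative (A : X →L[ℂ] X) :
    (∃ ε : ℝ, 0 < ε ∧ ∀ t : ℝ, 0 ≤ t →
        ‖NormedSpace.exp (t • A)‖ ≤ Real.exp (-t * ε)) ↔
      (∃ ε : ℝ, 0 < ε ∧ ∀ x : X, ∀ j ∈ dualitySet x,
        (j (A x)).re ≤ -ε * ‖x‖ ^ 2) := by
  constructor
  · rintro ⟨ε, hε, hdecay⟩
    exact ⟨ε, hε, fun x j hj => re_apply_le_of_norm_exp_smul_le hdecay hj⟩
  · rintro ⟨ε, hε, hA⟩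
    exact ⟨ε, hε, fun t ht => norm_exp_smul_le_of_dissipative hA ht⟩
end
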